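/- arXiv:2412.12769 — 3 statements merged into one kernel-verified Lean document; each statement's English description precedes it below -/
import Mathlib

section
/- Let $X$ be a quasi-Banach space with quasi-norm constant $C \geq 1$, i.e. $\|x+y\| \leq C(\|x\|+\|y\|)$ for all $x,y$. If a power series $\sum_{k=0}^{\infty} f_k z^k$ with coefficients $f_k \in X$ converges in $X$ for every $z$ in the open disc $B_R(0) \subseteq \mathbb{C}$, then for every $r < R$ the series converges absolutely and uniformly on the closed disc $\overline{B_r(0)}$. -/
/-!
Fix `ρ ∈ (r, R)` and put `θ = r / ρ < 1`. The terms of the series at `ρ` tend to zero, hence are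
bounded, so `‖zᵏ fₖ‖ ≤ M θᵏ` on the closed disc of radius `r`; this gives absolute convergence.
The quasi-triangle inequality only yields `‖b₀ + ⋯ + b_{J-1}‖ ≤ ∑ⱼ Cʲ⁺¹ ‖bⱼ‖`, so a geometric bound
alone does not make the tails small when `Cθ ≥ 1`. Grouping the terms into blocks of length
`L = 2ˢ` costs a factor `Cˢ` per block, while the block bounds decay like `(θᴸ)ʲ`; for `L` large
`Cθᴸ ≤ 1/2`, so every tail from `n` on is at most `K M θⁿ`, uniformly in `z`.
-/

open Filter Topology Finset

structure QBS (X : Type*) [AddCommGroup X] [Module ℂ X] where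
  qnorm : X → ℝ
  Cq : ℝ
  one_le_Cq : 1 ≤ Cq
  qnorm_nonneg : ∀ x, 0 ≤ qnorm x
  qnorm_eq_zero_iff : ∀ x, qnorm x = 0 ↔ x = 0
  qnorm_smul : ∀ (c : ℂ) (x), qnorm (c • x) = ‖c‖ * qnorm x
  qnorm_add_le : ∀ x y, qnorm (x + y) ≤ Cq * (qnorm x + qnorm y)
  complete : ∀ u : ℕ → X,
    (∀ ε : ℝ, 0 < ε → ∃ N, ∀ m ≥ N, ∀ n ≥ N, qnorm (u m - u n) ≤ ε) →
    ∃ x, Tendsto (fun n => qnorm (u n - x)) atTop (𝓝 0)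

lemma sum_range_mul_eq_sum_blocks {M : Type*} [AddCommMonoid M] (x : ℕ → M) (L i : ℕ) :
    ∑ k ∈ range (L * i), x k = ∑ j ∈ range i, ∑ l ∈ range L, x (L * j + l) := by
  induction i with
  | zero => simp
  | succ i ih => rw [mul_add_one, sum_range_add, ih, sum_range_succ]

namespace QBS

variable {X : Type*} [AddCommGroup X] [Module ℂ X] (q : QBS X)

lemma qnorm_zero : q.qnorm 0 = 0 := (q.qnorm_eq_zero_iff 0).2 rfl

lemma qnorm_neg (x : X) : q.qnorm (-x) = q.qnorm x := by
  simpa using q.qnorm_smul (-1) x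

lemma qnorm_sub_le (x y : X) : q.qnorm (x - y) ≤ q.Cq * (q.qnorm x + q.qnorm y) := by
  simpa [sub_eq_add_neg, qnorm_neg] using q.qnorm_add_le x (-y)

lemma Cq_pos : 0 < q.Cq := one_pos.trans_le q.one_le_Cq

lemma qnorm_sum_range_two_pow_le (x : ℕ → X) (s : ℕ) :
    q.qnorm (∑ l ∈ range (2 ^ s), x l) ≤ q.Cq ^ s * ∑ l ∈ range (2 ^ s), q.qnorm (x l) := by
  induction s generalizing x with
  | zero => simp
  | succ s ih =>
    rw [pow_succ, mul_two, sum_range_add, sum_range_add]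
    calc _ ≤ q.Cq * (q.qnorm (∑ l ∈ range (2 ^ s), x l)
              + q.qnorm (∑ l ∈ range (2 ^ s), x (2 ^ s + l))) := q.qnorm_add_le _ _
      _ ≤ q.Cq * (q.Cq ^ s * ∑ l ∈ range (2 ^ s), q.qnorm (x l)
              + q.Cq ^ s * ∑ l ∈ range (2 ^ s), q.qnorm (x (2 ^ s + l))) :=
          mul_le_mul_of_nonneg_left (add_le_add (ih _) (ih _)) q.Cq_pos.le
      _ = _ := by ring

lemma qnorm_sum_range_le (b : ℕ → X) (J : ℕ) :
    q.qnorm (∑ j ∈ range J, b j) ≤ ∑ j ∈ range J, q.Cq ^ (j + 1) * q.qnorm (b j) := by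
  induction J generalizing b with
  | zero => simp [qnorm_zero]
  | succ J ih =>
    rw [sum_range_succ', sum_range_succ']
    calc _ ≤ q.Cq * (q.qnorm (∑ j ∈ range J, b (j + 1)) + q.qnorm (b 0)) := q.qnorm_add_le _ _
      _ ≤ q.Cq * (∑ j ∈ range J, q.Cq ^ (j + 1) * q.qnorm (b (j + 1)) + q.qnorm (b 0)) :=
          mul_le_mul_of_nonneg_left (by linarith [ih fun j => b (j + 1)]) q.Cq_pos.le
      _ = _ := by rw [mul_add, mul_sum]; simp only [pow_succ]; ring_nf

lemma exists_qnorm_sum_range_mul_le {θ : ℝ} (hθ0 : 0 ≤ θ) (hθ1 : θ < 1) :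
    ∃ L > 0, ∃ K, ∀ (x : ℕ → X) (M : ℝ), (∀ k, q.qnorm (x k) ≤ M * θ ^ k) →
      ∀ i, q.qnorm (∑ k ∈ range (L * i), x k) ≤ K * M := by
  have hC := q.Cq_pos
  obtain ⟨s, hs⟩ : ∃ s, θ ^ s < 1 / (2 * q.Cq) :=
    ((tendsto_pow_atTop_nhds_zero_of_lt_one hθ0 hθ1).eventually
      (gt_mem_nhds (by positivity))).exists
  refine ⟨2 ^ s, by positivity, 2 * q.Cq ^ (s + 1) * 2 ^ s, fun x M hx i => ?_⟩
  set L := 2 ^ s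
  have hM : 0 ≤ M := by simpa using (q.qnorm_nonneg _).trans (hx 0)
  have hratio : q.Cq * θ ^ L ≤ 1 / 2 := by
    have : θ ^ L ≤ θ ^ s := pow_le_pow_of_le_one hθ0 hθ1.le Nat.lt_two_pow_self.le
    calc q.Cq * θ ^ L ≤ q.Cq * (1 / (2 * q.Cq)) := by gcongr; exact this.trans hs.le
      _ = 1 / 2 := by field_simp
  have hblock : ∀ j, q.Cq ^ (j + 1) * q.qnorm (∑ l ∈ range L, x (L * j + l))
      ≤ q.Cq ^ (s + 1) * L * M * (1 / 2) ^ j := by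
    intro j
    have hterms : ∑ l ∈ range L, q.qnorm (x (L * j + l)) ≤ L * (M * θ ^ (L * j)) := by
      calc _ ≤ ∑ l ∈ range L, M * θ ^ (L * j) := sum_le_sum fun l _ => (hx _).trans <|
              mul_le_mul_of_nonneg_left (pow_le_pow_of_le_one hθ0 hθ1.le le_self_add) hM
        _ = _ := by simp
    calc _ ≤ q.Cq ^ (j + 1) * (q.Cq ^ s * (L * (M * θ ^ (L * j)))) := by
          gcongr; exact (q.qnorm_sum_range_two_pow_le _ s).trans (by gcongr)
      _ = q.Cq ^ (s + 1) * L * M * (q.Cq * θ ^ L) ^ j := by rw [pow_mul, mul_pow]; ring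
      _ ≤ _ := by gcongr
  calc _ = q.qnorm (∑ j ∈ range i, ∑ l ∈ range L, x (L * j + l)) := by
        rw [sum_range_mul_eq_sum_blocks]
    _ ≤ ∑ j ∈ range i, q.Cq ^ (s + 1) * L * M * (1 / 2) ^ j :=
        (q.qnorm_sum_range_le _ i).trans (sum_le_sum fun j _ => hblock j)
    _ ≤ q.Cq ^ (s + 1) * L * M * 2 := by
        rw [← mul_sum]; gcongr; exact sum_geometric_two_le i
    _ = _ := by push_cast [L]; ring

lemma qnorm_sub_le_of_tendsto {ι : Type*} {l : Filter ι} [l.NeBot] {u : ι → X} {a b : X} {B : ℝ}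
    (hu : Tendsto (fun i => q.qnorm (u i - a)) l (𝓝 0)) (hb : ∀ i, q.qnorm (u i - b) ≤ B) :
    q.qnorm (b - a) ≤ q.Cq * B := by
  have hbound : ∀ i, q.qnorm (b - a) ≤ q.Cq * (q.qnorm (u i - a) + B) := fun i =>
    calc q.qnorm (b - a) = q.qnorm ((u i - a) - (u i - b)) := by congr 1; abel
      _ ≤ _ := (q.qnorm_sub_le _ _).trans (by gcongr; exacts [q.Cq_pos.le, hb i])
  have hlim : Tendsto (fun i => q.Cq * (q.qnorm (u i - a) + B)) l (𝓝 (q.Cq * B)) := by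
    simpa using (hu.add_const B).const_mul q.Cq
  exact ge_of_tendsto' hlim hbound

lemma exists_qnorm_sum_range_sub_le {θ : ℝ} (hθ0 : 0 ≤ θ) (hθ1 : θ < 1) :
    ∃ K, ∀ (x : ℕ → X) (M : ℝ) (s : X), (∀ k, q.qnorm (x k) ≤ M * θ ^ k) →
      Tendsto (fun n => q.qnorm (∑ k ∈ range n, x k - s)) atTop (𝓝 0) →
      ∀ n, q.qnorm (∑ k ∈ range n, x k - s) ≤ K * M * θ ^ n := by
  obtain ⟨L, hL, K, hK⟩ := q.exists_qnorm_sum_range_mul_le hθ0 hθ1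
  refine ⟨q.Cq * K, fun x M s hx hs n => ?_⟩
  have htail : ∀ i, q.qnorm (∑ k ∈ range (n + L * i), x k - ∑ k ∈ range n, x k)
      ≤ K * (M * θ ^ n) := fun i => by
    rw [sum_range_add, add_sub_cancel_left]
    exact hK (fun k => x (n + k)) _ (fun k => by rw [mul_assoc, ← pow_add]; exact hx _) i
  have hindex : Tendsto (fun i => n + L * i) atTop atTop :=
    tendsto_atTop_mono (fun i => (Nat.le_mul_of_pos_left i hL).trans le_add_self) tendsto_id
  calc _ ≤ q.Cq * (K * (M * θ ^ n)) := q.qnorm_sub_le_of_tendsto (hs.comp hindex) htail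
    _ = _ := by ring

lemma tendsto_qnorm_of_tendsto_sum_range {x : ℕ → X} {s : X}
    (hs : Tendsto (fun n => q.qnorm (∑ k ∈ range n, x k - s)) atTop (𝓝 0)) :
    Tendsto (fun k => q.qnorm (x k)) atTop (𝓝 0) := by
  have hbound : ∀ k, q.qnorm (x k) ≤ q.Cq *
      (q.qnorm (∑ i ∈ range (k + 1), x i - s) + q.qnorm (∑ i ∈ range k, x i - s)) := fun k => by
    convert q.qnorm_sub_le _ _ using 2
    rw [sum_range_succ]; abel
  have hlim := ((hs.comp (tendsto_add_atTop_nat 1)).add hs).const_mul q.Cq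
  rw [add_zero, mul_zero] at hlim
  exact squeeze_zero (fun k => q.qnorm_nonneg _) hbound hlim

lemma exists_qnorm_smul_le_geometric {f : ℕ → X} {ρ : ℝ} (hρ : 0 < ρ) {s : X}
    (hs : Tendsto (fun n => q.qnorm (∑ k ∈ range n, (ρ : ℂ) ^ k • f k - s)) atTop (𝓝 0))
    (r : ℝ) : ∃ M, ∀ z : ℂ, ‖z‖ ≤ r → ∀ k, q.qnorm (z ^ k • f k) ≤ M * (r / ρ) ^ k := by
  obtain ⟨M, hM⟩ := (q.tendsto_qnorm_of_tendsto_sum_range hs).bddAbove_range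
  have hρk : ∀ k, ρ ^ k * q.qnorm (f k) ≤ M := fun k => by
    simpa [q.qnorm_smul, abs_of_pos hρ] using hM ⟨k, rfl⟩
  refine ⟨M, fun z hz k => ?_⟩
  have hr : 0 ≤ r := (norm_nonneg z).trans hz
  calc q.qnorm (z ^ k • f k) = (‖z‖ / ρ) ^ k * (ρ ^ k * q.qnorm (f k)) := by
        rw [q.qnorm_smul, norm_pow, div_pow]; field_simp
    _ ≤ (r / ρ) ^ k * M := by
        gcongr
        exacts [mul_nonneg (by positivity) (q.qnorm_nonneg _), hρk k]
    _ = _ := mul_comm _ _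

end QBS

theorem power_series_abs_unif_conv_general {X : Type*} [AddCommGroup X] [Module ℂ X]
    (q : QBS X) (f : ℕ → X) (R : ℝ) (S : ℂ → X)
    (hconv : ∀ z : ℂ, ‖z‖ < R →
      Tendsto (fun n => q.qnorm ((∑ k ∈ Finset.range n, z ^ k • f k) - S z))
        atTop (𝓝 0))
    (r : ℝ) (hr0 : 0 ≤ r) (hrR : r < R) :
    (Summable fun k => q.qnorm (f k) * r ^ k) ∧
    ∀ ε : ℝ, 0 < ε → ∃ N, ∀ n ≥ N, ∀ z : ℂ, ‖z‖ ≤ r →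
      q.qnorm ((∑ k ∈ Finset.range n, z ^ k • f k) - S z) ≤ ε := by
  obtain ⟨ρ, hrρ, hρR⟩ := exists_between hrR
  have hρ : 0 < ρ := hr0.trans_lt hrρ
  have hθ0 : 0 ≤ r / ρ := div_nonneg hr0 hρ.le
  have hθ1 : r / ρ < 1 := (div_lt_one hρ).2 hrρ
  obtain ⟨M, hM⟩ :=
    q.exists_qnorm_smul_le_geometric hρ (hconv ρ (by simpa [abs_of_pos hρ] using hρR)) r
  obtain ⟨K, hK⟩ := q.exists_qnorm_sum_range_sub_le hθ0 hθ1
  refine ⟨.of_nonneg_of_le (fun k => mul_nonneg (q.qnorm_nonneg _) (pow_nonneg hr0 k))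
    (fun k => ?_) ((summable_geometric_of_lt_one hθ0 hθ1).mul_left M), fun ε hε => ?_⟩
  · simpa [q.qnorm_smul, abs_of_nonneg hr0, mul_comm] using hM r (by simp [abs_of_nonneg hr0]) k
  · have hlim : Tendsto (fun n => K * M * (r / ρ) ^ n) atTop (𝓝 0) := by
      simpa using (tendsto_pow_atTop_nhds_zero_of_lt_one hθ0 hθ1).const_mul (K * M)
    obtain ⟨N, hN⟩ := eventually_atTop.1 (hlim.eventually (ge_mem_nhds hε))
    exact ⟨N, fun n hn z hz =>
      (hK _ M _ (hM z hz) (hconv z (hz.trans_lt hrR)) n).trans (hN n hn)⟩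

/-- If a power series `∑ fₖ zᵏ` with coefficients in a quasi-Banach space
converges for every `z` in the open disc `B_R(0)`, then for every `r < R` it
converges absolutely and uniformly on the closed disc of radius `r`. -/
theorem power_series_abs_unif_conv {X : Type*} [AddCommGroup X] [Module ℂ X]
    (q : QBS X) (f : ℕ → X) (R : ℝ) (hR : 0 < R) (S : ℂ → X)
    (hconv : ∀ z : ℂ, ‖z‖ < R →
      Tendsto (fun n => q.qnorm ((∑ k ∈ Finset.range n, z ^ k • f k) - S z))
        atTop (𝓝 0))
    (r : ℝ) (hr0 : 0 ≤ r) (hrR : r < R) :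
    (Summable fun k => q.qnorm (f k) * r ^ k) ∧
    ∀ ε : ℝ, 0 < ε → ∃ N, ∀ n ≥ N, ∀ z : ℂ, ‖z‖ ≤ r →
      q.qnorm ((∑ k ∈ Finset.range n, z ^ k • f k) - S z) ≤ ε :=
  power_series_abs_unif_conv_general q f R S hconv r hr0 hrR
end

section
/- Let $X_0, X_1$ be quasi-Banach function spaces over $\Omega$, $\theta \in (0,1)$, and suppose both $X_0$ and $X_1$ are separable. Then the Calderón product $X_0^{1-\theta}X_1^\theta$ is separable. -/
open MeasureTheory Filter Topology Finset

noncomputable section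

/-- A quasi-Banach function space over a measure space `(α, μ)`:
a quasi-Banach space of (a.e. classes of) measurable functions with a weak
order unit and the lattice property. -/
structure QBFS (α : Type*) [MeasurableSpace α] (μ : MeasureTheory.Measure α) where
  Mem : (α → ℂ) → Prop
  qnorm : (α → ℂ) → ℝ
  Cq : ℝ
  one_le_Cq : 1 ≤ Cq
  mem_aemeasurable : ∀ f, Mem f → AEMeasurable f μ
  mem_congr : ∀ f g, Mem f → f =ᵐ[μ] g → Mem g
  qnorm_congr : ∀ f g, f =ᵐ[μ] g → qnorm f = qnorm g
  qnorm_nonneg : ∀ f, 0 ≤ qnorm f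
  qnorm_eq_zero_iff : ∀ f, Mem f → (qnorm f = 0 ↔ f =ᵐ[μ] 0)
  qnorm_smul : ∀ (c : ℂ) (f), qnorm (c • f) = ‖c‖ * qnorm f
  add_mem : ∀ f g, Mem f → Mem g → Mem (f + g)
  smul_mem : ∀ (c : ℂ) (f), Mem f → Mem (c • f)
  qnorm_add_le : ∀ f g, Mem f → Mem g → qnorm (f + g) ≤ Cq * (qnorm f + qnorm g)
  exists_weak_unit : ∃ f, Mem f ∧ ∀ᵐ ω ∂μ, 0 < ‖f ω‖
  lattice_mem : ∀ f g, Mem f → AEMeasurable g μ →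
    (∀ᵐ ω ∂μ, ‖g ω‖ ≤ ‖f ω‖) → Mem g
  lattice_qnorm : ∀ f g, Mem f →
    (∀ᵐ ω ∂μ, ‖g ω‖ ≤ ‖f ω‖) → qnorm g ≤ qnorm f
  complete : ∀ u : ℕ → α → ℂ, (∀ n, Mem (u n)) →
    (∀ ε : ℝ, 0 < ε → ∃ N, ∀ m ≥ N, ∀ n ≥ N, qnorm (u m - u n) ≤ ε) →
    ∃ f, Mem f ∧ Tendsto (fun n => qnorm (u n - f)) atTop (𝓝 0)

variable {α : Type*} [MeasurableSpace α] {μ : MeasureTheory.Measure α}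

/-- Membership in the sum space `X₀ + X₁`. -/
def SumMem (X0 X1 : QBFS α μ) (f : α → ℂ) : Prop :=
  ∃ f0 f1, X0.Mem f0 ∧ X1.Mem f1 ∧ f =ᵐ[μ] f0 + f1

/-- The set of numbers `‖f₀‖ + ‖f₁‖` over decompositions `f = f₀ + f₁`. -/
def sumNormSet (X0 X1 : QBFS α μ) (f : α → ℂ) : Set ℝ :=
  {r | ∃ f0 f1, X0.Mem f0 ∧ X1.Mem f1 ∧ f =ᵐ[μ] f0 + f1 ∧
    r = X0.qnorm f0 + X1.qnorm f1}

/-- The quasi-norm of the sum space `X₀ + X₁`. -/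
def sumNorm (X0 X1 : QBFS α μ) (f : α → ℂ) : ℝ := sInf (sumNormSet X0 X1 f)

/-- The set of numbers `‖f₀‖^(1-θ) ‖f₁‖^θ` over factorizations
`|f| ≤ |f₀|^(1-θ) |f₁|^θ` a.e. -/
def calSet (X0 X1 : QBFS α μ) (θ : ℝ) (f : α → ℂ) : Set ℝ :=
  {r | ∃ f0 f1, X0.Mem f0 ∧ X1.Mem f1 ∧
    (∀ᵐ ω ∂μ, ‖f ω‖ ≤
      ‖f0 ω‖ ^ (1 - θ) * ‖f1 ω‖ ^ θ) ∧
    r = X0.qnorm f0 ^ (1 - θ) * X1.qnorm f1 ^ θ}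

/-- Membership in the Calderón product `X₀^(1-θ) X₁^θ`. -/
def CalMem (X0 X1 : QBFS α μ) (θ : ℝ) (f : α → ℂ) : Prop :=
  AEMeasurable f μ ∧ (calSet X0 X1 θ f).Nonempty

/-- The quasi-norm of the Calderón product `X₀^(1-θ) X₁^θ`. -/
def calNorm (X0 X1 : QBFS α μ) (θ : ℝ) (f : α → ℂ) : ℝ := sInf (calSet X0 X1 θ f)

/-- Topological separability of a (quasi-normed) function space given by a
membership predicate and a quasi-norm: there is a countable subset which is
dense with respect to the quasi-norm. -/
def SeparableFS (Mem : (α → ℂ) → Prop) (q : (α → ℂ) → ℝ) : Prop :=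
  ∃ D : Set (α → ℂ), D.Countable ∧ (∀ d ∈ D, Mem d) ∧
    ∀ f, Mem f → ∀ ε : ℝ, 0 < ε → ∃ d ∈ D, q (f - d) < ε

/-!
Let `T ⊆ X₀ ∩ X₁` be countable and dense for both quasi-norms at once; it is built from
countable dense subsets of `X₀` and `X₁`. Given `|f| ≤ |G₀|^(1-θ) |G₁|^θ`, let `E n` be the set
where `|G₀|` and `|G₁|` differ by more than a factor `n`. Off `E n`, `|f|` is bounded by both
`n^θ |G₀|` and `n^(1-θ) |G₁|`, so that part of `f` lies in `X₀ ∩ X₁` and is approximated from `T`.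
On `E n`, `f` is factorized by `1_{E n} G₀` and `1_{E n} G₁`, which tend to `0` because separable
quasi-Banach function spaces are order continuous: otherwise there are disjoint blocks of
quasi-norm `> ε`, and their unions over subsets of `ℕ` form an uncountable `ε`-separated family.
-/

open scoped Function

lemma rpow_one_sub_mul_rpow_self (θ : ℝ) {x : ℝ} (hx : 0 ≤ x) : x ^ (1 - θ) * x ^ θ = x := by
  rw [← Real.rpow_add' hx (by norm_num), sub_add_cancel, Real.rpow_one]

lemma rpow_one_sub_mul_rpow_le_of_le {θ a b c : ℝ} (hθ : 0 ≤ θ) (ha : 0 ≤ a) (hb : 0 ≤ b)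
    (hc : 0 ≤ c) (hba : b ≤ c * a) : a ^ (1 - θ) * b ^ θ ≤ c ^ θ * a :=
  calc a ^ (1 - θ) * b ^ θ ≤ a ^ (1 - θ) * (c * a) ^ θ := by gcongr
    _ = c ^ θ * (a ^ (1 - θ) * a ^ θ) := by rw [Real.mul_rpow hc ha]; ring
    _ = c ^ θ * a := by rw [rpow_one_sub_mul_rpow_self θ ha]

lemma rpow_one_sub_mul_rpow_add_le {θ a b c d : ℝ} (hθ : θ ∈ Set.Ioo 0 1) (ha : 0 ≤ a)
    (hb : 0 ≤ b) (hc : 0 ≤ c) (hd : 0 ≤ d) :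
    a ^ (1 - θ) * b ^ θ + c ^ (1 - θ) * d ^ θ ≤ (a + c) ^ (1 - θ) * (b + d) ^ θ := by
  have h1θ : 1 - θ ≠ 0 := by linarith [hθ.2]
  have := Real.inner_le_Lp_mul_Lq_of_nonneg Finset.univ
    (f := ![a ^ (1 - θ), c ^ (1 - θ)]) (g := ![b ^ θ, d ^ θ])
    (Real.HolderConjugate.one_sub_inv_inv hθ.1 hθ.2)
    (fun i _ => by fin_cases i <;> simp <;> positivity)
    (fun i _ => by fin_cases i <;> simp <;> positivity)
  simpa [Fin.sum_univ_two, ← Real.rpow_mul, ha, hb, hc, hd, h1θ, hθ.1.ne'] using this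

lemma Antitone.pairwise_disjoint_on_sdiff_succ {β : Type*} {E : ℕ → Set β} (hE : Antitone E) :
    Pairwise (Disjoint on fun k => E k \ E (k + 1)) :=
  (pairwise_disjoint_on _).2 fun _ _ hjk =>
    Set.disjoint_left.2 fun _ hj hk => hj.2 (hE (Nat.succ_le_of_lt hjk) hk.1)

namespace QBFS

variable (X : QBFS α μ)

lemma Cq_pos : 0 < X.Cq := zero_lt_one.trans_le X.one_le_Cq

lemma mem_sub {f g : α → ℂ} (hf : X.Mem f) (hg : X.Mem g) : X.Mem (f - g) := by
  simpa [sub_eq_add_neg] using X.add_mem f _ hf (X.smul_mem (-1) g hg)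

lemma qnorm_sub_comm (f g : α → ℂ) : X.qnorm (f - g) = X.qnorm (g - f) := by
  simpa using (X.qnorm_smul (-1) (f - g)).symm

lemma qnorm_sub_le {f g h : α → ℂ} (hf : X.Mem f) (hg : X.Mem g) (hh : X.Mem h) :
    X.qnorm (f - h) ≤ X.Cq * (X.qnorm (f - g) + X.qnorm (g - h)) := by
  simpa using X.qnorm_add_le _ _ (X.mem_sub hf hg) (X.mem_sub hg hh)

lemma qnorm_sub_lt {f g h : α → ℂ} {r : ℝ} (hf : X.Mem f) (hg : X.Mem g) (hh : X.Mem h)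
    (hfg : X.qnorm (f - g) < r) (hhg : X.qnorm (h - g) < r) :
    X.qnorm (f - h) < 2 * X.Cq * r := by
  rw [X.qnorm_sub_comm h] at hhg
  calc X.qnorm (f - h) ≤ X.Cq * (X.qnorm (f - g) + X.qnorm (g - h)) := X.qnorm_sub_le hf hg hh
    _ < X.Cq * (r + r) := by gcongr; exact X.Cq_pos
    _ = 2 * X.Cq * r := by ring

lemma mem_indicator {f : α → ℂ} (hf : X.Mem f) {s : Set α} (hs : MeasurableSet s) :
    X.Mem (s.indicator f) :=
  X.lattice_mem f _ hf ((X.mem_aemeasurable f hf).indicator hs)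
    (Eventually.of_forall fun ω => by
      by_cases h : ω ∈ s <;> simp [h])

lemma mem_of_norm_le_mul {f g : α → ℂ} {c : ℝ} (hg : X.Mem g) (hf : AEMeasurable f μ)
    (hle : ∀ᵐ ω ∂μ, ‖f ω‖ ≤ c * ‖g ω‖) : X.Mem f :=
  X.lattice_mem _ f (X.smul_mem c g hg) hf <| hle.mono fun ω hω => by
    simpa using hω.trans (mul_le_mul_of_nonneg_right (Real.le_norm_self c) (norm_nonneg _))

lemma mem_ofReal_norm {f : α → ℂ} (hf : X.Mem f) : X.Mem (fun ω => (‖f ω‖ : ℂ)) :=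
  X.lattice_mem f _ hf
    (Complex.measurable_ofReal.comp_aemeasurable (X.mem_aemeasurable f hf).norm)
    (Eventually.of_forall fun ω => by simp)

lemma qnorm_ofReal_norm {f : α → ℂ} (hf : X.Mem f) :
    X.qnorm (fun ω => (‖f ω‖ : ℂ)) = X.qnorm f :=
  le_antisymm (X.lattice_qnorm f _ hf (Eventually.of_forall fun ω => by simp))
    (X.lattice_qnorm _ f (X.mem_ofReal_norm hf) (Eventually.of_forall fun ω => by simp))

lemma ae_eq_zero_of_norm_le_of_tendsto {h : α → ℂ} {u : ℕ → α → ℂ}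
    (hh : AEMeasurable h μ) (hu : ∀ n, X.Mem (u n))
    (hlim : Tendsto (fun n => X.qnorm (u n)) atTop (𝓝 0))
    (hle : ∀ᶠ n in atTop, ∀ᵐ ω ∂μ, ‖h ω‖ ≤ ‖u n ω‖) : h =ᵐ[μ] 0 := by
  obtain ⟨n₀, hn₀⟩ := hle.exists
  have hmem : X.Mem h := X.lattice_mem _ h (hu n₀) hh hn₀
  refine (X.qnorm_eq_zero_iff h hmem).1 (le_antisymm ?_ (X.qnorm_nonneg h))
  exact ge_of_tendsto hlim (hle.mono fun n hn => X.lattice_qnorm _ h (hu n) hn)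

lemma qnorm_ofReal_norm_add_le {p q : α → ℂ} (hp : X.Mem p) (hq : X.Mem q) :
    X.qnorm ((fun ω => (‖p ω‖ : ℂ)) + fun ω => (‖q ω‖ : ℂ)) ≤
      X.Cq * (X.qnorm p + X.qnorm q) := by
  rw [← X.qnorm_ofReal_norm hp, ← X.qnorm_ofReal_norm hq]
  exact X.qnorm_add_le _ _ (X.mem_ofReal_norm hp) (X.mem_ofReal_norm hq)

lemma tendsto_qnorm_indicator_of_cauchy {f : α → ℂ} (hf : X.Mem f) {E : ℕ → Set α}
    (hE : ∀ n, MeasurableSet (E n)) (hanti : Antitone E) (hempty : ⋂ n, E n = ∅)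
    (hcauchy : ∀ ε : ℝ, 0 < ε → ∃ N, ∀ m ≥ N, ∀ n ≥ N,
      X.qnorm ((E m).indicator f - (E n).indicator f) ≤ ε) :
    Tendsto (fun n => X.qnorm ((E n).indicator f)) atTop (𝓝 0) := by
  obtain ⟨s, hs, hlim⟩ := X.complete _ (fun n => X.mem_indicator hf (hE n)) hcauchy
  -- The limit `s` vanishes off `E k`, since `1_{E m} f` does for `m ≥ k`.
  have hoff : ∀ k, (E k)ᶜ.indicator s =ᵐ[μ] 0 := fun k =>
    X.ae_eq_zero_of_norm_le_of_tendsto ((X.mem_aemeasurable s hs).indicator (hE k).compl)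
      (fun n => X.mem_sub (X.mem_indicator hf (hE n)) hs) hlim
      (eventually_atTop.2 ⟨k, fun m hm => Eventually.of_forall fun ω => by
        by_cases hω : ω ∈ E k
        · simp [hω]
        · have hωm : ω ∉ E m := fun h => hω (hanti hm h)
          simp [hω, hωm]⟩)
  have hs0 : s =ᵐ[μ] 0 := by
    filter_upwards [ae_all_iff.2 hoff] with ω hω
    obtain ⟨k, hk⟩ : ∃ k, ω ∉ E k := by
      simpa using Set.eq_empty_iff_forall_notMem.1 hempty ω
    simpa [hk] using hω k
  refine hlim.congr fun n => X.qnorm_congr _ _ ?_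
  filter_upwards [hs0] with ω hω
  simp [hω]

lemma countable_of_pairwise_lt_qnorm_sub (hsep : SeparableFS X.Mem X.qnorm) {ι : Type*}
    {h : ι → α → ℂ} (hh : ∀ i, X.Mem (h i)) {ε : ℝ} (hε : 0 < ε)
    (hsepd : Pairwise fun i j => ε < X.qnorm (h i - h j)) : Countable ι := by
  obtain ⟨D, hDc, hDmem, hD⟩ := hsep
  have : Countable D := hDc.to_subtype
  choose φ hφD hφ using fun i => hD (h i) (hh i) _ (div_pos hε (mul_pos two_pos X.Cq_pos))
  refine Function.Injective.countable (f := fun i => (⟨φ i, hφD i⟩ : D)) fun i j hij => ?_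
  by_contra hne
  have hφij : φ i = φ j := congrArg Subtype.val hij
  have hlt := X.qnorm_sub_lt (hh i) (hDmem _ (hφD i)) (hh j) (hφ i) (hφij ▸ hφ j)
  rw [mul_div_cancel₀ _ (mul_pos two_pos X.Cq_pos).ne'] at hlt
  exact (hsepd hne).not_gt hlt

/-- The functions `f · 1_{⋃ k ∈ A, R k}`, `A ⊆ ℕ`, form an uncountable `ε`-separated family. -/
lemma not_separable_of_pairwise_disjoint {f : α → ℂ} (hf : X.Mem f) {R : ℕ → Set α}
    (hR : ∀ k, MeasurableSet (R k)) (hdisj : Pairwise (Disjoint on R)) {ε : ℝ} (hε : 0 < ε)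
    (hbig : ∀ k, ε < X.qnorm ((R k).indicator f)) : ¬ SeparableFS X.Mem X.qnorm := by
  intro hsep
  set h : Set ℕ → α → ℂ := fun A => (⋃ k ∈ A, R k).indicator f
  have hmem : ∀ A, X.Mem (h A) := fun A =>
    X.mem_indicator hf (MeasurableSet.biUnion A.to_countable fun k _ => hR k)
  have hsepd : ∀ A B k, k ∈ A → k ∉ B → ε < X.qnorm (h A - h B) := by
    intro A B k hkA hkB
    refine (hbig k).trans_le (X.lattice_qnorm _ _ (X.mem_sub (hmem A) (hmem B))
      (Eventually.of_forall fun ω => ?_))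
    by_cases hω : ω ∈ R k
    · have hωB : ω ∉ ⋃ j ∈ B, R j := by
        simp only [Set.mem_iUnion, not_exists]
        exact fun j hj hωj =>
          Set.disjoint_left.1 (hdisj (ne_of_mem_of_not_mem hj hkB)) hωj hω
      simp [h, hω, Set.mem_biUnion hkA hω, hωB]
    · simp [hω]
  have : Countable (Set ℕ) := X.countable_of_pairwise_lt_qnorm_sub hsep hmem hε fun A B hAB => by
    obtain ⟨k, hk⟩ : ∃ k, ¬(k ∈ A ↔ k ∈ B) := by
      simpa [Set.ext_iff] using hAB
    by_cases hkA : k ∈ A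
    · exact hsepd A B k hkA fun hkB => hk (iff_of_true hkA hkB)
    · rw [X.qnorm_sub_comm]
      exact hsepd B A k (by tauto) hkA
  obtain ⟨e, he⟩ := Countable.exists_injective_nat (Set ℕ)
  exact Function.cantor_injective e he

/-- Otherwise every tail contains a block `E N \ E m` of quasi-norm `> ε`, and iterating
`N ↦ m` yields a sequence of disjoint such blocks. -/
lemma cauchy_indicator_of_separable (hsep : SeparableFS X.Mem X.qnorm) {f : α → ℂ}
    (hf : X.Mem f) {E : ℕ → Set α} (hE : ∀ n, MeasurableSet (E n)) (hanti : Antitone E) :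
    ∀ ε : ℝ, 0 < ε → ∃ N, ∀ m ≥ N, ∀ n ≥ N,
      X.qnorm ((E m).indicator f - (E n).indicator f) ≤ ε := by
  by_contra! hcon
  obtain ⟨ε, hε, hbig⟩ := hcon
  have hstep : ∀ N, ∃ m, N ≤ m ∧ ε < X.qnorm ((E N \ E m).indicator f) := by
    intro N
    obtain ⟨m, hm, n, hn, hlt⟩ := hbig N
    refine ⟨max m n, le_max_of_le_left hm, hlt.trans_le (X.lattice_qnorm _ _
      (X.mem_indicator hf ((hE N).diff (hE _))) (Eventually.of_forall fun ω => ?_))⟩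
    have hmN : ω ∈ E m → ω ∈ E N := fun h => hanti hm h
    have hnN : ω ∈ E n → ω ∈ E N := fun h => hanti hn h
    have hMm : ω ∈ E (max m n) → ω ∈ E m := fun h => hanti (le_max_left m n) h
    have hMn : ω ∈ E (max m n) → ω ∈ E n := fun h => hanti (le_max_right m n) h
    by_cases hωm : ω ∈ E m <;> by_cases hωn : ω ∈ E n <;> by_cases hωM : ω ∈ E (max m n) <;>
      by_cases hωN : ω ∈ E N <;> simp_all
  choose g hgN hg using hstep
  have hψ : Monotone fun k => g^[k] 0 := monotone_nat_of_le_succ fun k => by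
    simpa only [Function.iterate_succ_apply'] using hgN _
  refine X.not_separable_of_pairwise_disjoint hf (fun k => (hE _).diff (hE _))
    (hanti.comp_monotone hψ).pairwise_disjoint_on_sdiff_succ hε (fun k => ?_) hsep
  simpa only [Function.comp_apply, Function.iterate_succ_apply'] using hg _

lemma tendsto_qnorm_indicator_of_separable (hsep : SeparableFS X.Mem X.qnorm) {f : α → ℂ}
    (hf : X.Mem f) {E : ℕ → Set α} (hE : ∀ n, MeasurableSet (E n)) (hanti : Antitone E)
    (hempty : ⋂ n, E n = ∅) :
    Tendsto (fun n => X.qnorm ((E n).indicator f)) atTop (𝓝 0) :=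
  X.tendsto_qnorm_indicator_of_cauchy hf hE hanti hempty
    (X.cauchy_indicator_of_separable hsep hf hE hanti)

end QBFS

lemma exists_countable_dense_inter {X0 X1 : QBFS α μ} (h0 : SeparableFS X0.Mem X0.qnorm)
    (h1 : SeparableFS X1.Mem X1.qnorm) :
    ∃ T : Set (α → ℂ), T.Countable ∧ (∀ t ∈ T, X0.Mem t ∧ X1.Mem t) ∧
      ∀ g, X0.Mem g → X1.Mem g → ∀ η : ℝ, 0 < η →
        ∃ t ∈ T, X0.qnorm (g - t) < η ∧ X1.qnorm (g - t) < η := by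
  obtain ⟨D0, hD0c, hD0m, hD0⟩ := h0
  obtain ⟨D1, hD1c, hD1m, hD1⟩ := h1
  have : Countable D0 := hD0c.to_subtype
  have : Countable D1 := hD1c.to_subtype
  let Near : D0 × D1 × ℕ → (α → ℂ) → Prop := fun d t => X0.Mem t ∧ X1.Mem t ∧
    X0.qnorm (t - d.1) < 1 / (d.2.2 + 1) ∧ X1.qnorm (t - d.2.1) < 1 / (d.2.2 + 1)
  have hchoice : ∀ d, ∃ t, (∃ t', Near d t') → Near d t := fun d => by
    by_cases h : ∃ t, Near d t
    · exact h.imp fun _ ht _ => ht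
    · exact ⟨0, fun h' => absurd h' h⟩
  choose pick hpick using hchoice
  refine ⟨pick '' {d | ∃ t, Near d t}, (Set.to_countable _).image _, ?_, ?_⟩
  · rintro _ ⟨d, hd, rfl⟩
    exact ⟨(hpick d hd).1, (hpick d hd).2.1⟩
  intro g hg0 hg1 η hη
  have hsmall : ∀ X : QBFS α μ, ∀ᶠ k : ℕ in atTop, 2 * X.Cq * (1 / ((k : ℝ) + 1)) < η :=
    fun X => by
      have := tendsto_one_div_add_atTop_nhds_zero_nat.const_mul (2 * X.Cq)
      rw [mul_zero] at this
      exact this.eventually_lt_const hη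
  obtain ⟨k, hk0, hk1⟩ := ((hsmall X0).and (hsmall X1)).exists
  obtain ⟨d0, hd0, hgd0⟩ := hD0 g hg0 (1 / ((k : ℝ) + 1)) (by positivity)
  obtain ⟨d1, hd1, hgd1⟩ := hD1 g hg1 (1 / ((k : ℝ) + 1)) (by positivity)
  have hg : Near (⟨d0, hd0⟩, ⟨d1, hd1⟩, k) g := ⟨hg0, hg1, hgd0, hgd1⟩
  obtain ⟨ht0, ht1, htd0, htd1⟩ := hpick _ ⟨g, hg⟩
  exact ⟨_, ⟨_, ⟨g, hg⟩, rfl⟩, (X0.qnorm_sub_lt hg0 (hD0m _ hd0) ht0 hgd0 htd0).trans hk0,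
    (X1.qnorm_sub_lt hg1 (hD1m _ hd1) ht1 hgd1 htd1).trans hk1⟩

section Calderon

variable {X0 X1 : QBFS α μ} {θ : ℝ}

lemma calNorm_le {f f0 f1 : α → ℂ} (h0 : X0.Mem f0) (h1 : X1.Mem f1)
    (hdom : ∀ᵐ ω ∂μ, ‖f ω‖ ≤ ‖f0 ω‖ ^ (1 - θ) * ‖f1 ω‖ ^ θ) :
    calNorm X0 X1 θ f ≤ X0.qnorm f0 ^ (1 - θ) * X1.qnorm f1 ^ θ := by
  refine csInf_le ⟨0, ?_⟩ ⟨f0, f1, h0, h1, hdom, rfl⟩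
  rintro _ ⟨g0, g1, -, -, -, rfl⟩
  exact mul_nonneg (Real.rpow_nonneg (X0.qnorm_nonneg _) _)
    (Real.rpow_nonneg (X1.qnorm_nonneg _) _)

lemma calNorm_le_of_qnorm_le (hθ : θ ∈ Set.Icc 0 1) {f f0 f1 : α → ℂ} {t : ℝ}
    (h0 : X0.Mem f0) (h1 : X1.Mem f1)
    (hdom : ∀ᵐ ω ∂μ, ‖f ω‖ ≤ ‖f0 ω‖ ^ (1 - θ) * ‖f1 ω‖ ^ θ)
    (ht0 : X0.qnorm f0 ≤ t) (ht1 : X1.qnorm f1 ≤ t) : calNorm X0 X1 θ f ≤ t := by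
  have h1θ : 0 ≤ 1 - θ := sub_nonneg.2 hθ.2
  have ht : 0 ≤ t := (X0.qnorm_nonneg _).trans ht0
  calc calNorm X0 X1 θ f ≤ X0.qnorm f0 ^ (1 - θ) * X1.qnorm f1 ^ θ := calNorm_le h0 h1 hdom
    _ ≤ t ^ (1 - θ) * t ^ θ :=
      mul_le_mul (Real.rpow_le_rpow (X0.qnorm_nonneg _) ht0 h1θ)
        (Real.rpow_le_rpow (X1.qnorm_nonneg _) ht1 hθ.1)
        (Real.rpow_nonneg (X1.qnorm_nonneg _) _) (Real.rpow_nonneg ht _)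
    _ = t := rpow_one_sub_mul_rpow_self θ ht

/-- Hölder's inequality for two terms makes `(|p₀| + |q₀|, |p₁| + |q₁|)` a factorization
of `φ + ψ`. -/
lemma calNorm_add_le (hθ : θ ∈ Set.Ioo 0 1) {φ ψ p0 p1 q0 q1 : α → ℂ} {s t : ℝ}
    (hp0 : X0.Mem p0) (hp1 : X1.Mem p1) (hq0 : X0.Mem q0) (hq1 : X1.Mem q1)
    (hφ : ∀ᵐ ω ∂μ, ‖φ ω‖ ≤ ‖p0 ω‖ ^ (1 - θ) * ‖p1 ω‖ ^ θ)
    (hψ : ∀ᵐ ω ∂μ, ‖ψ ω‖ ≤ ‖q0 ω‖ ^ (1 - θ) * ‖q1 ω‖ ^ θ)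
    (hps0 : X0.qnorm p0 ≤ s) (hps1 : X1.qnorm p1 ≤ s)
    (hqt0 : X0.qnorm q0 ≤ t) (hqt1 : X1.qnorm q1 ≤ t) :
    calNorm X0 X1 θ (φ + ψ) ≤ max X0.Cq X1.Cq * (s + t) := by
  have hnorm : ∀ (p q : α → ℂ) ω,
      ‖((fun ω => (‖p ω‖ : ℂ)) + fun ω => (‖q ω‖ : ℂ)) ω‖ = ‖p ω‖ + ‖q ω‖ := fun p q ω => by
    rw [Pi.add_apply, ← Complex.ofReal_add, Complex.norm_of_nonneg (by positivity)]
  have hsum : ∀ (X : QBFS α μ) {p q : α → ℂ}, X.Cq ≤ max X0.Cq X1.Cq → X.Mem p → X.Mem q →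
      X.qnorm p ≤ s → X.qnorm q ≤ t →
      X.qnorm ((fun ω => (‖p ω‖ : ℂ)) + fun ω => (‖q ω‖ : ℂ)) ≤ max X0.Cq X1.Cq * (s + t) :=
    fun X _ _ hC hp hq hs ht => (X.qnorm_ofReal_norm_add_le hp hq).trans <|
      mul_le_mul hC (add_le_add hs ht) (add_nonneg (X.qnorm_nonneg _) (X.qnorm_nonneg _))
        (X.Cq_pos.le.trans hC)
  refine calNorm_le_of_qnorm_le (Set.Ioo_subset_Icc_self hθ)
    (X0.add_mem _ _ (X0.mem_ofReal_norm hp0) (X0.mem_ofReal_norm hq0))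
    (X1.add_mem _ _ (X1.mem_ofReal_norm hp1) (X1.mem_ofReal_norm hq1)) ?_
    (hsum X0 (le_max_left _ _) hp0 hq0 hps0 hqt0) (hsum X1 (le_max_right _ _) hp1 hq1 hps1 hqt1)
  filter_upwards [hφ, hψ] with ω hφω hψω
  rw [hnorm, hnorm]
  calc ‖(φ + ψ) ω‖ ≤ ‖φ ω‖ + ‖ψ ω‖ := norm_add_le _ _
    _ ≤ _ := add_le_add hφω hψω
    _ ≤ _ := rpow_one_sub_mul_rpow_add_le hθ (norm_nonneg _) (norm_nonneg _)
      (norm_nonneg _) (norm_nonneg _)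

lemma calMem_of_mem_of_mem {f : α → ℂ} (h0 : X0.Mem f) (h1 : X1.Mem f) :
    CalMem X0 X1 θ f :=
  ⟨X0.mem_aemeasurable f h0, _, f, f, h0, h1,
    Eventually.of_forall fun _ => (rpow_one_sub_mul_rpow_self θ (norm_nonneg _)).ge, rfl⟩

/-- Matching zero sets of the factors are what make `⋂ n, unbalancedSet G0 G1 n` empty. -/
lemma exists_measurable_factorization (hθ : θ ∈ Set.Ioo 0 1) {f : α → ℂ}
    (hf : CalMem X0 X1 θ f) :
    ∃ G0 G1 : α → ℂ, X0.Mem G0 ∧ X1.Mem G1 ∧ Measurable G0 ∧ Measurable G1 ∧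
      (∀ ω, G0 ω = 0 ↔ G1 ω = 0) ∧
      ∀ᵐ ω ∂μ, ‖f ω‖ ≤ ‖G0 ω‖ ^ (1 - θ) * ‖G1 ω‖ ^ θ := by
  obtain ⟨-, -, f0, f1, h0, h1, hdom, -⟩ := hf
  have hae0 := X0.mem_aemeasurable f0 h0
  have hae1 := X1.mem_aemeasurable f1 h1
  set S : Set α := hae0.mk f0 ⁻¹' {0}ᶜ ∩ hae1.mk f1 ⁻¹' {0}ᶜ
  have hS : MeasurableSet S := (hae0.measurable_mk (measurableSet_singleton 0).compl).inter
    (hae1.measurable_mk (measurableSet_singleton 0).compl)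
  refine ⟨S.indicator (hae0.mk f0), S.indicator (hae1.mk f1),
    X0.mem_indicator (X0.mem_congr _ _ h0 hae0.ae_eq_mk) hS,
    X1.mem_indicator (X1.mem_congr _ _ h1 hae1.ae_eq_mk) hS,
    hae0.measurable_mk.indicator hS, hae1.measurable_mk.indicator hS, fun ω => ?_, ?_⟩
  · by_cases hω : ω ∈ S <;> simp_all [S]
  · filter_upwards [hdom, hae0.ae_eq_mk, hae1.ae_eq_mk] with ω hω h0ω h1ω
    rw [h0ω, h1ω] at hω
    by_cases hωS : ω ∈ S
    · simpa [hωS] using hω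
    · have h1θ : 1 - θ ≠ 0 := by linarith [hθ.2]
      have hfactor : hae0.mk f0 ω = 0 ∨ hae1.mk f1 ω = 0 := by
        simpa [S, or_iff_not_imp_left] using hωS
      have hfω : f ω = 0 := by
        rcases hfactor with h | h <;>
          simpa [h, Real.zero_rpow h1θ, Real.zero_rpow hθ.1.ne'] using hω
      rw [hfω, norm_zero]
      positivity

end Calderon

def unbalancedSet {β : Type*} (G0 G1 : β → ℂ) (n : ℕ) : Set β :=
  {ω | n * ‖G1 ω‖ < ‖G0 ω‖} ∪ {ω | n * ‖G0 ω‖ < ‖G1 ω‖}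

lemma measurableSet_unbalancedSet {G0 G1 : α → ℂ} (h0 : Measurable G0) (h1 : Measurable G1)
    (n : ℕ) : MeasurableSet (unbalancedSet G0 G1 n) :=
  (measurableSet_lt (h1.norm.const_mul _) h0.norm).union
    (measurableSet_lt (h0.norm.const_mul _) h1.norm)

lemma antitone_unbalancedSet {β : Type*} (G0 G1 : β → ℂ) :
    Antitone (unbalancedSet G0 G1) := fun _ _ hnm _ hω =>
  hω.imp (fun h => (mul_le_mul_of_nonneg_right (Nat.cast_le.2 hnm) (norm_nonneg _)).trans_lt h)
    (fun h => (mul_le_mul_of_nonneg_right (Nat.cast_le.2 hnm) (norm_nonneg _)).trans_lt h)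

lemma iInter_unbalancedSet_eq_empty {β : Type*} {G0 G1 : β → ℂ}
    (hzero : ∀ ω, G0 ω = 0 ↔ G1 ω = 0) : ⋂ n, unbalancedSet G0 G1 n = ∅ := by
  refine Set.eq_empty_iff_forall_notMem.2 fun ω hω => ?_
  rw [Set.mem_iInter] at hω
  by_cases h0 : G0 ω = 0
  · simpa [unbalancedSet, h0, (hzero ω).1 h0] using hω 0
  have ha : 0 < ‖G0 ω‖ := norm_pos_iff.2 h0
  have hb : 0 < ‖G1 ω‖ := norm_pos_iff.2 (mt (hzero ω).2 h0)
  obtain ⟨n, hn⟩ := exists_nat_gt (‖G0 ω‖ / ‖G1 ω‖ + ‖G1 ω‖ / ‖G0 ω‖)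
  have hab := div_pos ha hb
  have hba := div_pos hb ha
  rcases hω n with h | h
  · linarith [(lt_div_iff₀ hb).2 h]
  · linarith [(lt_div_iff₀ ha).2 h]

lemma ae_norm_indicator_compl_unbalancedSet_le {θ : ℝ} (hθ : θ ∈ Set.Icc 0 1)
    {f G0 G1 : α → ℂ} (hdom : ∀ᵐ ω ∂μ, ‖f ω‖ ≤ ‖G0 ω‖ ^ (1 - θ) * ‖G1 ω‖ ^ θ) (n : ℕ) :
    ∀ᵐ ω ∂μ, ‖(unbalancedSet G0 G1 n)ᶜ.indicator f ω‖ ≤ (n : ℝ) ^ θ * ‖G0 ω‖ ∧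
      ‖(unbalancedSet G0 G1 n)ᶜ.indicator f ω‖ ≤ (n : ℝ) ^ (1 - θ) * ‖G1 ω‖ := by
  filter_upwards [hdom] with ω hω
  by_cases hωU : ω ∈ unbalancedSet G0 G1 n
  · simp only [Set.indicator_of_notMem (Set.notMem_compl_iff.2 hωU), norm_zero]
    constructor <;> positivity
  rw [Set.indicator_of_mem hωU]
  simp only [unbalancedSet, Set.mem_union, Set.mem_ofPred_eq, not_or, not_lt] at hωU
  have h1 := rpow_one_sub_mul_rpow_le_of_le (sub_nonneg.2 hθ.2) (norm_nonneg (G1 ω))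
    (norm_nonneg (G0 ω)) n.cast_nonneg hωU.1
  rw [sub_sub_cancel, mul_comm] at h1
  exact ⟨hω.trans (rpow_one_sub_mul_rpow_le_of_le hθ.1 (norm_nonneg _) (norm_nonneg _)
    n.cast_nonneg hωU.2), hω.trans h1⟩

lemma exists_small_indicator_and_mem_inter {X0 X1 : QBFS α μ} {θ : ℝ}
    (hθ : θ ∈ Set.Ioo 0 1) (h0 : SeparableFS X0.Mem X0.qnorm)
    (h1 : SeparableFS X1.Mem X1.qnorm) {f : α → ℂ} (hf : CalMem X0 X1 θ f) {δ : ℝ}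
    (hδ : 0 < δ) :
    ∃ (s : Set α) (p0 p1 : α → ℂ), X0.Mem p0 ∧ X1.Mem p1 ∧ X0.qnorm p0 < δ ∧
      X1.qnorm p1 < δ ∧ (∀ᵐ ω ∂μ, ‖s.indicator f ω‖ ≤ ‖p0 ω‖ ^ (1 - θ) * ‖p1 ω‖ ^ θ) ∧
      X0.Mem (sᶜ.indicator f) ∧ X1.Mem (sᶜ.indicator f) := by
  obtain ⟨G0, G1, hG0, hG1, hG0m, hG1m, hzero, hdom⟩ := exists_measurable_factorization hθ hf
  have hE := measurableSet_unbalancedSet hG0m hG1m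
  have hsmall : ∀ (X : QBFS α μ) (G : α → ℂ), SeparableFS X.Mem X.qnorm → X.Mem G →
      ∀ᶠ n in atTop, X.qnorm ((unbalancedSet G0 G1 n).indicator G) < δ := fun X G hsep hG =>
    (X.tendsto_qnorm_indicator_of_separable hsep hG hE (antitone_unbalancedSet G0 G1)
      (iInter_unbalancedSet_eq_empty hzero)).eventually_lt_const hδ
  obtain ⟨n, hn0, hn1⟩ := ((hsmall X0 G0 h0 hG0).and (hsmall X1 G1 h1 hG1)).exists
  have hgm : AEMeasurable ((unbalancedSet G0 G1 n)ᶜ.indicator f) μ := hf.1.indicator (hE n).compl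
  have hbound := ae_norm_indicator_compl_unbalancedSet_le (Set.Ioo_subset_Icc_self hθ) hdom n
  refine ⟨unbalancedSet G0 G1 n, _, _, X0.mem_indicator hG0 (hE n), X1.mem_indicator hG1 (hE n),
    hn0, hn1, ?_, X0.mem_of_norm_le_mul hG0 hgm (hbound.mono fun _ h => h.1),
    X1.mem_of_norm_le_mul hG1 hgm (hbound.mono fun _ h => h.2)⟩
  filter_upwards [hdom] with ω hω
  by_cases hωE : ω ∈ unbalancedSet G0 G1 n
  · simpa [hωE] using hω
  · simp only [Set.indicator_of_notMem hωE, norm_zero]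
    positivity

/-- If both `X₀` and `X₁` are separable quasi-Banach function spaces, then the
Calderón product `X₀^(1-θ) X₁^θ` is separable. -/
theorem calderon_product_separable (X0 X1 : QBFS α μ) (θ : ℝ)
    (hθ : θ ∈ Set.Ioo (0 : ℝ) 1)
    (h0 : SeparableFS X0.Mem X0.qnorm) (h1 : SeparableFS X1.Mem X1.qnorm) :
    SeparableFS (CalMem X0 X1 θ) (calNorm X0 X1 θ) := by
  obtain ⟨T, hTc, hTmem, hTdense⟩ := exists_countable_dense_inter h0 h1
  refine ⟨T, hTc, fun t ht => calMem_of_mem_of_mem (hTmem t ht).1 (hTmem t ht).2, ?_⟩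
  intro f hf ε hε
  set C := max X0.Cq X1.Cq
  have hC : 0 < C := X0.Cq_pos.trans_le (le_max_left _ _)
  have hδ : 0 < ε / (4 * C) := by positivity
  obtain ⟨s, p0, p1, hp0, hp1, hq0, hq1, hdom, hg0, hg1⟩ :=
    exists_small_indicator_and_mem_inter hθ h0 h1 hf hδ
  obtain ⟨t, htT, ht0, ht1⟩ := hTdense _ hg0 hg1 _ hδ
  refine ⟨t, htT, ?_⟩
  have hsplit : f - t = s.indicator f + (sᶜ.indicator f - t) := by
    rw [← add_sub_assoc, Set.indicator_self_add_compl]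
  calc calNorm X0 X1 θ (f - t) = calNorm X0 X1 θ (s.indicator f + (sᶜ.indicator f - t)) := by
        rw [hsplit]
    _ ≤ C * (ε / (4 * C) + ε / (4 * C)) :=
        calNorm_add_le hθ hp0 hp1 (X0.mem_sub hg0 (hTmem t htT).1)
          (X1.mem_sub hg1 (hTmem t htT).2) hdom
          (Eventually.of_forall fun _ => (rpow_one_sub_mul_rpow_self θ (norm_nonneg _)).ge)
          hq0.le hq1.le ht0.le ht1.le
    _ < ε := by
        field_simp
        linarith
end
end

section
/- Let $X_0, X_1$ be quasi-Banach function spaces over $\Omega$ that are both $p$-convex for some $p \in (0,1]$, with constants $C_0, C_1$. Then the sum space $X_0 + X_1$ (with quasi-norm $\|f\| = \inf\{\|f_0\|_{X_0} + \|f_1\|_{X_1} : f = f_0 + f_1\}$) is also $p$-convex. -/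
open MeasureTheory Filter Topology Finset

noncomputable section

variable {α : Type*} [MeasurableSpace α] {μ : MeasureTheory.Measure α}

/-- `p`-convexity (with constant `C`) of a function space given by a membership
predicate and a quasi-norm. -/
def PConvexFS (Mem : (α → ℂ) → Prop) (q : (α → ℂ) → ℝ) (p C : ℝ) : Prop :=
  ∀ n : ℕ, ∀ g : ℕ → α → ℂ, (∀ k, Mem (g k)) →
    q (fun ω => (((∑ k ∈ Finset.range (n + 1), ‖g k ω‖ ^ p)
        ^ (1 / p) : ℝ) : ℂ)) ≤
      C * (∑ k ∈ Finset.range (n + 1), q (g k) ^ p) ^ (1 / p)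

/-!
Choose decompositions `g k = u k + v k` with `u k ∈ X₀`, `v k ∈ X₁`. Since `p ≤ 1`, pointwise
`(∑ |g k|^p)^(1/p) ≤ 2^(1/p-1) (U + V)` with `U = (∑ |u k|^p)^(1/p) ∈ X₀` and `V ∈ X₁`, and the
lattice property splits the left side into a piece dominated by `2^(1/p-1) U` and one dominated
by `2^(1/p-1) V`. The `p`-convexity of `X₀` and `X₁` bounds the norms of `U` and `V` by
`Cᵢ (∑ (‖u k‖ + ‖v k‖)^p)^(1/p)`; letting the decompositions approach the infimum defining the
sum norm gives the constant `2^(1/p) max C₀ C₁`.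
-/

theorem Real.rpow_sum_rpow_inv_le_card_mul_sum {ι : Type*} (s : Finset ι) {x : ι → ℝ}
    (hx : ∀ i ∈ s, 0 ≤ x i) {p : ℝ} (hp : 0 < p) :
    (∑ i ∈ s, x i ^ p) ^ (1 / p) ≤ (#s : ℝ) ^ (1 / p) * ∑ i ∈ s, x i := by
  have hsum : 0 ≤ ∑ i ∈ s, x i := sum_nonneg hx
  have hpow : ∑ i ∈ s, x i ^ p ≤ #s * (∑ i ∈ s, x i) ^ p := by
    rw [← nsmul_eq_mul]
    exact sum_le_card_nsmul _ _ _ fun i hi =>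
      Real.rpow_le_rpow (hx i hi) (single_le_sum hx hi) hp.le
  calc (∑ i ∈ s, x i ^ p) ^ (1 / p) ≤ (#s * (∑ i ∈ s, x i) ^ p) ^ (1 / p) :=
        Real.rpow_le_rpow (sum_nonneg fun i hi => Real.rpow_nonneg (hx i hi) _) hpow
          (by positivity)
    _ = (#s : ℝ) ^ (1 / p) * ∑ i ∈ s, x i := by
        rw [Real.mul_rpow (by positivity) (by positivity), one_div,
          Real.rpow_rpow_inv hsum hp.ne']

theorem Real.rpow_sum_rpow_inv_le_of_le {ι : Type*} (s : Finset ι) {a b : ι → ℝ}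
    (ha : ∀ i ∈ s, 0 ≤ a i) (hab : ∀ i ∈ s, a i ≤ b i) {p : ℝ} (hp : 0 < p) :
    (∑ i ∈ s, a i ^ p) ^ (1 / p) ≤ (∑ i ∈ s, b i ^ p) ^ (1 / p) := by
  gcongr with i hi
  · exact sum_nonneg fun i hi => Real.rpow_nonneg (ha i hi) _
  · exact ha i hi
  · exact hab i hi

theorem Real.rpow_add_rpow_rpow_inv_le {a b p : ℝ} (ha : 0 ≤ a) (hb : 0 ≤ b) (hp0 : 0 < p)
    (hp1 : p ≤ 1) : (a ^ p + b ^ p) ^ (1 / p) ≤ 2 ^ (1 / p - 1) * (a + b) := by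
  lift a to NNReal using ha
  lift b to NNReal using hb
  have h := NNReal.rpow_add_le_mul_rpow_add_rpow (a ^ p) (b ^ p) (one_le_one_div hp0 hp1)
  rw [one_div, NNReal.rpow_rpow_inv hp0.ne', NNReal.rpow_rpow_inv hp0.ne'] at h
  rw [one_div]
  exact_mod_cast h

theorem le_apply_sInf_of_forall_mem {ι γ β : Type*} [ConditionallyCompleteLinearOrder γ]
    [TopologicalSpace γ] [OrderTopology γ] [FirstCountableTopology γ]
    [TopologicalSpace β] [Preorder β] [ClosedIciTopology β]
    {S : ι → Set γ} (hne : ∀ i, (S i).Nonempty) (hbdd : ∀ i, BddBelow (S i))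
    {Φ : (ι → γ) → β} (hΦ : ContinuousAt Φ fun i => sInf (S i)) {b : β}
    (h : ∀ r : ι → γ, (∀ i, r i ∈ S i) → b ≤ Φ r) :
    b ≤ Φ fun i => sInf (S i) := by
  choose r _ hr_tendsto hr_mem using fun i => exists_seq_tendsto_sInf (hne i) (hbdd i)
  have hlim : Tendsto (fun m i => r i m) atTop (𝓝 fun i => sInf (S i)) :=
    tendsto_pi_nhds.2 hr_tendsto
  exact ge_of_tendsto (hΦ.tendsto.comp hlim) (Eventually.of_forall fun m => h _ fun i => hr_mem i m)

theorem Complex.norm_ofReal_min_div_norm_mul (z : ℂ) {r : ℝ} (hr : 0 ≤ r) :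
    ‖((min ‖z‖ r / ‖z‖ : ℝ) : ℂ) * z‖ = min ‖z‖ r := by
  rcases eq_or_ne z 0 with rfl | hz
  · simp [hr]
  rw [norm_mul, Complex.norm_of_nonneg (by positivity), div_mul_cancel₀ _ (norm_ne_zero_iff.2 hz)]

theorem Complex.norm_sub_ofReal_min_div_norm_mul (z : ℂ) {r : ℝ} (hr : 0 ≤ r) :
    ‖z - ((min ‖z‖ r / ‖z‖ : ℝ) : ℂ) * z‖ = ‖z‖ - min ‖z‖ r := by
  rcases eq_or_ne z 0 with rfl | hz
  · simp [hr]
  have hz' : ‖z‖ ≠ 0 := norm_ne_zero_iff.2 hz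
  have hle : min ‖z‖ r / ‖z‖ ≤ 1 := div_le_one_of_le₀ (min_le_left _ _) (norm_nonneg _)
  calc ‖z - ((min ‖z‖ r / ‖z‖ : ℝ) : ℂ) * z‖ = ‖((1 - min ‖z‖ r / ‖z‖ : ℝ) : ℂ) * z‖ := by
        push_cast; ring_nf
    _ = ‖z‖ - min ‖z‖ r := by
        rw [norm_mul, Complex.norm_of_nonneg (sub_nonneg.2 hle), sub_mul,
          div_mul_cancel₀ _ hz', one_mul]

def lpSum {ι Ω : Type*} (p : ℝ) (s : Finset ι) (g : ι → Ω → ℂ) (ω : Ω) : ℝ :=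
  (∑ k ∈ s, ‖g k ω‖ ^ p) ^ (1 / p)

section lpSum

variable {ι Ω : Type*} {p : ℝ} {s : Finset ι} {g u v : ι → Ω → ℂ}

theorem lpSum_nonneg (ω : Ω) : 0 ≤ lpSum p s g ω :=
  Real.rpow_nonneg (sum_nonneg fun _ _ => Real.rpow_nonneg (norm_nonneg _) _) _

theorem lpSum_rpow (hp : p ≠ 0) (ω : Ω) : lpSum p s g ω ^ p = ∑ k ∈ s, ‖g k ω‖ ^ p := by
  rw [lpSum, one_div, Real.rpow_inv_rpow
    (sum_nonneg fun _ _ => Real.rpow_nonneg (norm_nonneg _) _) hp]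

theorem aemeasurable_lpSum [MeasurableSpace Ω] {μ : Measure Ω}
    (hg : ∀ k ∈ s, AEMeasurable (g k) μ) :
    AEMeasurable (lpSum p s g) μ :=
  (Finset.aemeasurable_fun_sum _ fun k hk => (hg k hk).norm.pow_const p).pow_const _

theorem lpSum_le_of_norm_le_add (hp0 : 0 < p) (hp1 : p ≤ 1) {ω : Ω}
    (h : ∀ k ∈ s, ‖g k ω‖ ≤ ‖u k ω‖ + ‖v k ω‖) :
    lpSum p s g ω ≤ 2 ^ (1 / p - 1) * (lpSum p s u ω + lpSum p s v ω) := by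
  have hsum : ∑ k ∈ s, ‖g k ω‖ ^ p ≤ lpSum p s u ω ^ p + lpSum p s v ω ^ p := by
    rw [lpSum_rpow hp0.ne', lpSum_rpow hp0.ne', ← sum_add_distrib]
    refine sum_le_sum fun k hk => ?_
    calc ‖g k ω‖ ^ p ≤ (‖u k ω‖ + ‖v k ω‖) ^ p :=
          Real.rpow_le_rpow (norm_nonneg _) (h k hk) hp0.le
      _ ≤ ‖u k ω‖ ^ p + ‖v k ω‖ ^ p :=
          Real.rpow_add_le_add_rpow (norm_nonneg _) (norm_nonneg _) hp0.le hp1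
  calc lpSum p s g ω ≤ (lpSum p s u ω ^ p + lpSum p s v ω ^ p) ^ (1 / p) :=
        Real.rpow_le_rpow (sum_nonneg fun _ _ => Real.rpow_nonneg (norm_nonneg _) _) hsum
          (by positivity)
    _ ≤ 2 ^ (1 / p - 1) * (lpSum p s u ω + lpSum p s v ω) :=
        Real.rpow_add_rpow_rpow_inv_le (lpSum_nonneg ω) (lpSum_nonneg ω) hp0 hp1

end lpSum

namespace QBFS

variable (X : QBFS α μ)

theorem zero_mem : X.Mem 0 := by
  obtain ⟨f, hf, -⟩ := X.exists_weak_unit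
  simpa using X.smul_mem 0 f hf

theorem sum_mem {ι : Type*} (s : Finset ι) {f : ι → α → ℂ} (hf : ∀ k ∈ s, X.Mem (f k)) :
    X.Mem (∑ k ∈ s, f k) := by
  classical
  induction s using Finset.induction_on with
  | empty => simpa using X.zero_mem
  | insert k s hk ih =>
    rw [sum_insert hk]
    exact X.add_mem _ _ (hf k (mem_insert_self k s)) (ih fun j hj => hf j (mem_insert_of_mem hj))

theorem qnorm_ofReal_smul {c : ℝ} (hc : 0 ≤ c) (f : α → ℂ) :
    X.qnorm ((c : ℂ) • f) = c * X.qnorm f := by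
  rw [X.qnorm_smul, Complex.norm_of_nonneg hc]

theorem ofReal_norm_mem {f : α → ℂ} (hf : X.Mem f) : X.Mem fun ω => (‖f ω‖ : ℂ) :=
  X.lattice_mem f _ hf
    (Complex.measurable_ofReal.comp_aemeasurable (X.mem_aemeasurable f hf).norm)
    (Eventually.of_forall fun ω => by simp)

theorem lpSum_mem {ι : Type*} {p : ℝ} (hp : 0 < p) (s : Finset ι) {u : ι → α → ℂ}
    (hu : ∀ k ∈ s, X.Mem (u k)) : X.Mem fun ω => (lpSum p s u ω : ℂ) := by
  have hdom : X.Mem ((((#s : ℝ) ^ (1 / p) : ℝ) : ℂ) • ∑ k ∈ s, fun ω => (‖u k ω‖ : ℂ)) :=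
    X.smul_mem _ _ (X.sum_mem s fun k hk => X.ofReal_norm_mem (hu k hk))
  refine X.lattice_mem _ _ hdom
    (Complex.measurable_ofReal.comp_aemeasurable
      (aemeasurable_lpSum fun k hk => X.mem_aemeasurable _ (hu k hk)))
    (Eventually.of_forall fun ω => ?_)
  have hsum : 0 ≤ ∑ k ∈ s, ‖u k ω‖ := sum_nonneg fun _ _ => norm_nonneg _
  simp only [Complex.norm_of_nonneg (lpSum_nonneg ω), Pi.smul_apply, Finset.sum_apply,
    ← Complex.ofReal_sum, smul_eq_mul, ← Complex.ofReal_mul, Complex.norm_of_nonneg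
      (mul_nonneg (Real.rpow_nonneg (Nat.cast_nonneg _) _) hsum)]
  exact Real.rpow_sum_rpow_inv_le_card_mul_sum s (fun _ _ => norm_nonneg _) hp

end QBFS

theorem PConvexFS.mono {Ω : Type*} {Mem : (Ω → ℂ) → Prop} {q : (Ω → ℂ) → ℝ} {p C D : ℝ}
    (h : PConvexFS Mem q p C) (hCD : C ≤ D) (hq : ∀ f, 0 ≤ q f) : PConvexFS Mem q p D :=
  fun n g hg => (h n g hg).trans <| mul_le_mul_of_nonneg_right hCD <|
    Real.rpow_nonneg (sum_nonneg fun _ _ => Real.rpow_nonneg (hq _) _) _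

section SumSpace

variable {X0 X1 : QBFS α μ}

theorem bddBelow_sumNormSet (f : α → ℂ) : BddBelow (sumNormSet X0 X1 f) :=
  ⟨0, by
    rintro r ⟨f0, f1, -, -, -, rfl⟩
    exact add_nonneg (X0.qnorm_nonneg f0) (X1.qnorm_nonneg f1)⟩

theorem sumNormSet_nonempty {f : α → ℂ} (hf : SumMem X0 X1 f) : (sumNormSet X0 X1 f).Nonempty :=
  let ⟨f0, f1, hf0, hf1, hf⟩ := hf
  ⟨_, f0, f1, hf0, hf1, hf, rfl⟩

theorem sumNorm_le {f f0 f1 : α → ℂ} (hf0 : X0.Mem f0) (hf1 : X1.Mem f1) (hf : f =ᵐ[μ] f0 + f1) :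
    sumNorm X0 X1 f ≤ X0.qnorm f0 + X1.qnorm f1 :=
  csInf_le (bddBelow_sumNormSet f) ⟨f0, f1, hf0, hf1, hf, rfl⟩

theorem sumNorm_le_of_norm_le_add {F G0 G1 : α → ℂ} (hF : AEMeasurable F μ) (hG0 : X0.Mem G0)
    (hG1 : X1.Mem G1) (h : ∀ᵐ ω ∂μ, ‖F ω‖ ≤ ‖G0 ω‖ + ‖G1 ω‖) :
    sumNorm X0 X1 F ≤ X0.qnorm G0 + X1.qnorm G1 := by
  set F0 : α → ℂ := fun ω => ((min ‖F ω‖ ‖G0 ω‖ / ‖F ω‖ : ℝ) : ℂ) * F ω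
  have hF0_le : ∀ ω, ‖F0 ω‖ ≤ ‖G0 ω‖ := fun ω => by
    rw [Complex.norm_ofReal_min_div_norm_mul _ (norm_nonneg _)]
    exact min_le_right _ _
  have hF1_le : ∀ᵐ ω ∂μ, ‖(F - F0) ω‖ ≤ ‖G1 ω‖ := by
    filter_upwards [h] with ω hω
    rw [Pi.sub_apply, Complex.norm_sub_ofReal_min_div_norm_mul _ (norm_nonneg _)]
    rcases min_cases ‖F ω‖ ‖G0 ω‖ with ⟨hmin, -⟩ | ⟨hmin, -⟩ <;> rw [hmin]
    · simp
    · linarith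
  have hF0_meas : AEMeasurable F0 μ :=
    (Complex.measurable_ofReal.comp_aemeasurable
      ((hF.norm.min (X0.mem_aemeasurable _ hG0).norm).div hF.norm)).mul hF
  have hF0 : X0.Mem F0 := X0.lattice_mem G0 F0 hG0 hF0_meas (Eventually.of_forall hF0_le)
  have hF1 : X1.Mem (F - F0) := X1.lattice_mem G1 _ hG1 (hF.sub hF0_meas) hF1_le
  calc sumNorm X0 X1 F ≤ X0.qnorm F0 + X1.qnorm (F - F0) :=
        sumNorm_le hF0 hF1 (Eventually.of_forall fun ω => by simp)
    _ ≤ X0.qnorm G0 + X1.qnorm G1 :=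
        add_le_add (X0.lattice_qnorm G0 F0 hG0 (Eventually.of_forall hF0_le))
          (X1.lattice_qnorm G1 _ hG1 hF1_le)

theorem sumNorm_lpSum_le {p C : ℝ} (hp0 : 0 < p) (hp1 : p ≤ 1) (hC : 0 ≤ C)
    (h0 : PConvexFS X0.Mem X0.qnorm p C) (h1 : PConvexFS X1.Mem X1.qnorm p C) (n : ℕ)
    {g u v : ℕ → α → ℂ} (hu : ∀ k, X0.Mem (u k)) (hv : ∀ k, X1.Mem (v k))
    (huv : ∀ k, g k =ᵐ[μ] u k + v k) :
    sumNorm X0 X1 (fun ω => (lpSum p (range (n + 1)) g ω : ℂ)) ≤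
      2 ^ (1 / p) * C *
        (∑ k ∈ range (n + 1), (X0.qnorm (u k) + X1.qnorm (v k)) ^ p) ^ (1 / p) := by
  set s := range (n + 1)
  set c : ℝ := 2 ^ (1 / p - 1) with hc_def
  have hc : 0 ≤ c := by positivity
  set R := ∑ k ∈ s, (X0.qnorm (u k) + X1.qnorm (v k)) ^ p
  have hsplit : sumNorm X0 X1 (fun ω => (lpSum p s g ω : ℂ)) ≤
      X0.qnorm ((c : ℂ) • fun ω => (lpSum p s u ω : ℂ)) +
        X1.qnorm ((c : ℂ) • fun ω => (lpSum p s v ω : ℂ)) := by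
    refine sumNorm_le_of_norm_le_add ?_ (X0.smul_mem _ _ (X0.lpSum_mem hp0 s fun k _ => hu k))
      (X1.smul_mem _ _ (X1.lpSum_mem hp0 s fun k _ => hv k)) ?_
    · refine Complex.measurable_ofReal.comp_aemeasurable (aemeasurable_lpSum fun k _ => ?_)
      exact ((X0.mem_aemeasurable _ (hu k)).add (X1.mem_aemeasurable _ (hv k))).congr (huv k).symm
    · filter_upwards [ae_all_iff.2 huv] with ω hω
      simp only [Pi.smul_apply, smul_eq_mul, norm_mul, Complex.norm_of_nonneg hc,
        Complex.norm_of_nonneg (lpSum_nonneg ω)]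
      rw [← mul_add]
      exact lpSum_le_of_norm_le_add hp0 hp1 fun k _ => (hω k).symm ▸ norm_add_le _ _
  have hX0 : X0.qnorm (fun ω => (lpSum p s u ω : ℂ)) ≤ C * R ^ (1 / p) :=
    (h0 n u hu).trans <| mul_le_mul_of_nonneg_left (Real.rpow_sum_rpow_inv_le_of_le s
      (fun k _ => X0.qnorm_nonneg _) (fun k _ => le_add_of_nonneg_right (X1.qnorm_nonneg _)) hp0) hC
  have hX1 : X1.qnorm (fun ω => (lpSum p s v ω : ℂ)) ≤ C * R ^ (1 / p) :=
    (h1 n v hv).trans <| mul_le_mul_of_nonneg_left (Real.rpow_sum_rpow_inv_le_of_le s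
      (fun k _ => X1.qnorm_nonneg _) (fun k _ => le_add_of_nonneg_left (X0.qnorm_nonneg _)) hp0) hC
  calc sumNorm X0 X1 (fun ω => (lpSum p s g ω : ℂ))
      ≤ c * X0.qnorm (fun ω => (lpSum p s u ω : ℂ)) +
          c * X1.qnorm (fun ω => (lpSum p s v ω : ℂ)) := by
        rwa [← X0.qnorm_ofReal_smul hc, ← X1.qnorm_ofReal_smul hc]
    _ ≤ c * (C * R ^ (1 / p)) + c * (C * R ^ (1 / p)) := by gcongr
    _ = 2 ^ (1 / p) * C * R ^ (1 / p) := by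
        rw [hc_def, Real.rpow_sub_one two_ne_zero]
        ring

end SumSpace

theorem sum_space_p_convex_general (X0 X1 : QBFS α μ) (p C0 C1 : ℝ)
    (hp0 : 0 < p) (hp1 : p ≤ 1) (hC0 : 1 ≤ C0)
    (h0 : PConvexFS X0.Mem X0.qnorm p C0)
    (h1 : PConvexFS X1.Mem X1.qnorm p C1) :
    ∃ C : ℝ, 1 ≤ C ∧ PConvexFS (SumMem X0 X1) (sumNorm X0 X1) p C := by
  set K := max C0 C1
  have hK : 1 ≤ K := hC0.trans (le_max_left _ _)
  refine ⟨2 ^ (1 / p) * K, one_le_mul_of_one_le_of_one_le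
    (Real.one_le_rpow one_le_two (by positivity)) hK, fun n g hg => ?_⟩
  have hΦ : Continuous fun r : ℕ → ℝ =>
      2 ^ (1 / p) * K * (∑ k ∈ range (n + 1), r k ^ p) ^ (1 / p) :=
    continuous_const.mul <| (continuous_finsetSum _ fun k _ =>
      (continuous_apply k).rpow_const fun _ => Or.inr hp0.le).rpow_const
        fun _ => Or.inr (by positivity)
  refine le_apply_sInf_of_forall_mem (fun k => sumNormSet_nonempty (hg k))
    (fun k => bddBelow_sumNormSet (g k)) hΦ.continuousAt fun r hr => ?_
  choose u v hu hv huv hr using hr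
  simp only [hr]
  exact sumNorm_lpSum_le hp0 hp1 (zero_le_one.trans hK)
    (h0.mono (le_max_left _ _) X0.qnorm_nonneg) (h1.mono (le_max_right _ _) X1.qnorm_nonneg)
    n hu hv huv

/-- If `X₀` and `X₁` are `p`-convex quasi-Banach function spaces, then the sum
space `X₀ + X₁` is `p`-convex. -/
theorem sum_space_p_convex (X0 X1 : QBFS α μ) (p C0 C1 : ℝ)
    (hp0 : 0 < p) (hp1 : p ≤ 1) (hC0 : 1 ≤ C0) (hC1 : 1 ≤ C1)
    (h0 : PConvexFS X0.Mem X0.qnorm p C0)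
    (h1 : PConvexFS X1.Mem X1.qnorm p C1) :
    ∃ C : ℝ, 1 ≤ C ∧ PConvexFS (SumMem X0 X1) (sumNorm X0 X1) p C :=
  sum_space_p_convex_general X0 X1 p C0 C1 hp0 hp1 hC0 h0 h1
end
end
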